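/- arXiv:math/0305270 — 10 statements merged into one kernel-verified Lean document; each statement's English description precedes it below -/
import Mathlib

section
/- For all n ≥ 0, a_{2n} = Σ_{i=0}^{n} C(2n+1, 2i+1) k^{n-i}. -/
open Finset in
private 
theorem hC (k : ℤ) (n : ℕ) :
    ∑ i ∈ range (n + 1), ((2 * n + 1).choose (2 * i + 2) : ℤ) * k ^ (n - i)
      = k * (∑ i ∈ range (n + 1), ((2 * n + 1).choose (2 * i) : ℤ) * k ^ (n - i)) - k ^ (n + 1) := by
  have h1 : k * (∑ i ∈ range (n + 1), ((2 * n + 1).choose (2 * i) : ℤ) * k ^ (n - i))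
      = ∑ i ∈ range (n + 1), ((2 * n + 1).choose (2 * i) : ℤ) * k ^ (n + 1 - i) := by
    rw [Finset.mul_sum]
    refine Finset.sum_congr rfl fun i hi => ?_
    simp only [mem_range] at hi
    rw [show n + 1 - i = (n - i) + 1 by omega, pow_succ]
    ring
  rw [h1, Finset.sum_range_succ' (fun i => ((2 * n + 1).choose (2 * i) : ℤ) * k ^ (n + 1 - i))]
  rw [Finset.sum_range_succ]
  simp only [Nat.choose_eq_zero_of_lt (by omega : 2 * n + 1 < 2 * n + 2)]
  have h2 : ∀ i ∈ range n, ((2*n+1).choose (2*(i+1)) : ℤ) * k ^ (n + 1 - (i+1))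
      = ((2*n+1).choose (2*i+2) : ℤ) * k ^ (n - i) := by
    intro i hi
    congr 2
    omega
  rw [Finset.sum_congr rfl h2]
  simp

open Finset in
private theorem keyA (k : ℤ) (n : ℕ) :
    ∑ i ∈ range (n + 2), ((2 * (n + 1) + 1).choose (2 * i + 1) : ℤ) * k ^ (n + 1 - i) =
      (1 + k) * (∑ i ∈ range (n + 1), ((2 * n + 1).choose (2 * i + 1) : ℤ) * k ^ (n - i))
        + 2 * k * (∑ i ∈ range (n + 1), ((2 * n + 1).choose (2 * i) : ℤ) * k ^ (n - i)) := by
  have hsplit : ∀ i ∈ range (n + 2),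
      ((2 * (n + 1) + 1).choose (2 * i + 1) : ℤ) * k ^ (n + 1 - i)
        = ((2 * n + 2).choose (2 * i) : ℤ) * k ^ (n + 1 - i)
          + ((2 * n + 2).choose (2 * i + 1) : ℤ) * k ^ (n + 1 - i) := by
    intro i _
    rw [show 2 * (n + 1) + 1 = (2 * n + 2) + 1 by ring, Nat.choose_succ_succ]
    push_cast
    ring
  rw [Finset.sum_congr rfl hsplit, Finset.sum_add_distrib]
  -- even part
  have heven : ∑ i ∈ range (n + 2), ((2 * n + 2).choose (2 * i) : ℤ) * k ^ (n + 1 - i)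
      = (∑ i ∈ range (n + 1), ((2 * n + 1).choose (2 * i + 1) : ℤ) * k ^ (n - i))
        + k * (∑ i ∈ range (n + 1), ((2 * n + 1).choose (2 * i) : ℤ) * k ^ (n - i)) := by
    rw [Finset.sum_range_succ' (fun i => ((2 * n + 2).choose (2 * i) : ℤ) * k ^ (n + 1 - i))]
    have h3 : ∀ i ∈ range (n + 1), ((2 * n + 2).choose (2 * (i + 1)) : ℤ) * k ^ (n + 1 - (i + 1))
        = ((2 * n + 1).choose (2 * i + 1) : ℤ) * k ^ (n - i)
          + ((2 * n + 1).choose (2 * i + 2) : ℤ) * k ^ (n - i) := by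
      intro i _
      rw [show 2 * (i + 1) = (2 * i + 1) + 1 by ring,
        show 2 * n + 2 = (2 * n + 1) + 1 by ring, Nat.choose_succ_succ]
      push_cast
      ring
    rw [Finset.sum_congr rfl h3, Finset.sum_add_distrib, hC]
    simp
    ring
  -- odd part
  have hodd : ∑ i ∈ range (n + 2), ((2 * n + 2).choose (2 * i + 1) : ℤ) * k ^ (n + 1 - i)
      = k * (∑ i ∈ range (n + 1), ((2 * n + 1).choose (2 * i + 1) : ℤ) * k ^ (n - i))
        + k * (∑ i ∈ range (n + 1), ((2 * n + 1).choose (2 * i) : ℤ) * k ^ (n - i)) := by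
    rw [Finset.sum_range_succ]
    rw [Nat.choose_eq_zero_of_lt (by omega : 2 * n + 2 < 2 * (n + 1) + 1)]
    have h4 : ∀ i ∈ range (n + 1), ((2 * n + 2).choose (2 * i + 1) : ℤ) * k ^ (n + 1 - i)
        = k * (((2 * n + 1).choose (2 * i) : ℤ) * k ^ (n - i))
          + k * (((2 * n + 1).choose (2 * i + 1) : ℤ) * k ^ (n - i)) := by
      intro i hi
      simp only [mem_range] at hi
      rw [show 2 * n + 2 = (2 * n + 1) + 1 by ring, Nat.choose_succ_succ,
        show n + 1 - i = (n - i) + 1 by omega, pow_succ]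
      push_cast
      ring
    rw [Finset.sum_congr rfl h4, Finset.sum_add_distrib, Finset.mul_sum, Finset.mul_sum]
    push_cast
    ring
  rw [heven, hodd]
  ring

open Finset in
private theorem keyB (k : ℤ) (n : ℕ) :
    ∑ i ∈ range (n + 2), ((2 * (n + 1) + 1).choose (2 * i) : ℤ) * k ^ (n + 1 - i) =
      2 * (∑ i ∈ range (n + 1), ((2 * n + 1).choose (2 * i + 1) : ℤ) * k ^ (n - i))
        + (1 + k) * (∑ i ∈ range (n + 1), ((2 * n + 1).choose (2 * i) : ℤ) * k ^ (n - i)) := by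
  rw [Finset.sum_range_succ' (fun i => ((2 * (n + 1) + 1).choose (2 * i) : ℤ) * k ^ (n + 1 - i))]
  have h3 : ∀ i ∈ range (n + 1), ((2 * (n + 1) + 1).choose (2 * (i + 1)) : ℤ) * k ^ (n + 1 - (i + 1))
      = (((2 * n + 1).choose (2 * i) : ℤ) * k ^ (n - i)
          + 2 * (((2 * n + 1).choose (2 * i + 1) : ℤ) * k ^ (n - i)))
        + ((2 * n + 1).choose (2 * i + 2) : ℤ) * k ^ (n - i) := by
    intro i _
    have e1 : (2 * (n + 1) + 1).choose (2 * (i + 1))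
        = ((2 * n + 1).choose (2 * i) + (2 * n + 1).choose (2 * i + 1))
          + ((2 * n + 1).choose (2 * i + 1) + (2 * n + 1).choose (2 * i + 2)) := by
      rw [show 2 * (i + 1) = (2 * i + 1) + 1 by ring,
        show 2 * (n + 1) + 1 = ((2 * n + 1) + 1) + 1 by ring, Nat.choose_succ_succ ((2 * n + 1) + 1) (2 * i + 1),
        Nat.choose_succ_succ (2 * n + 1) (2 * i), Nat.choose_succ_succ (2 * n + 1) (2 * i + 1)]
    rw [e1, show n + 1 - (i + 1) = n - i by omega]
    push_cast
    ring
  rw [Finset.sum_congr rfl h3, Finset.sum_add_distrib, Finset.sum_add_distrib, hC,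
    Nat.choose_zero_right, ← Finset.mul_sum]
  push_cast
  ring

theorem stmt0 (k : ℤ) (hk : 1 ≤ k) (a b : ℕ → ℤ)
    (ha0 : a 0 = 1) (hb0 : b 0 = 1)
    (ha : ∀ n, a (n + 1) = a n + k * b n)
    (hb : ∀ n, b (n + 1) = a n + b n) :
    ∀ n, a (2 * n) = ∑ i ∈ Finset.range (n + 1),
      (Nat.choose (2 * n + 1) (2 * i + 1) : ℤ) * k ^ (n - i) := by
  have key : ∀ n, a (2 * n) = (∑ i ∈ Finset.range (n + 1),
        (Nat.choose (2 * n + 1) (2 * i + 1) : ℤ) * k ^ (n - i))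
      ∧ b (2 * n) = ∑ i ∈ Finset.range (n + 1),
        (Nat.choose (2 * n + 1) (2 * i) : ℤ) * k ^ (n - i) := by
    intro n
    induction n with
    | zero => simp [ha0, hb0]
    | succ n ih =>
      obtain ⟨iha, ihb⟩ := ih
      have h2 : 2 * (n + 1) = 2 * n + 1 + 1 := by ring
      have hA : a (2 * (n + 1)) = (1 + k) * a (2 * n) + 2 * k * b (2 * n) := by
        rw [h2, ha, hb, ha]; ring
      have hB : b (2 * (n + 1)) = 2 * a (2 * n) + (1 + k) * b (2 * n) := by
        rw [h2, hb, hb, ha]; ring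
      constructor
      · rw [hA, iha, ihb, show n + 1 + 1 = n + 2 from rfl, keyA k n]
      · rw [hB, iha, ihb, show n + 1 + 1 = n + 2 from rfl, keyB k n]
  exact fun n => (key n).1
end

section
/- For all n ≥ 0, b_{2n+1} = Σ_{i=0}^{n} C(2n+2, 2i+1) k^{n-i}. -/
/-! The pair `(a n, b n)` is `(1 + √k) ^ (n + 1)` in `ℤ√k`, so `b (2n+1)` is the `√k`-coordinate of
`(1 + √k) ^ (2n+2)`; in its binomial expansion only the odd powers `√k ^ (2j+1) = k ^ j • √k`
contribute to that coordinate. -/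

open Finset Zsqrtd

theorem Finset.sum_range_two_mul {M : Type*} [AddCommMonoid M] (f : ℕ → M) (n : ℕ) :
    ∑ j ∈ range (2 * n), f j = ∑ i ∈ range n, (f (2 * i) + f (2 * i + 1)) := by
  induction n with
  | zero => simp
  | succ n ih =>
    rw [mul_add, mul_one, sum_range_succ, sum_range_succ, sum_range_succ, ← ih, add_assoc]

namespace Zsqrtd

variable {d : ℤ}

theorem sqrtd_pow_two_mul (i : ℕ) : (sqrtd : ℤ√d) ^ (2 * i) = ((d ^ i : ℤ) : ℤ√d) := by
  rw [pow_mul, sq, dmuld, Int.cast_pow]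

theorem im_sqrtd_pow_two_mul (i : ℕ) : ((sqrtd : ℤ√d) ^ (2 * i)).im = 0 := by
  rw [sqrtd_pow_two_mul, im_intCast]

theorem im_sqrtd_pow_two_mul_add_one (i : ℕ) : ((sqrtd : ℤ√d) ^ (2 * i + 1)).im = d ^ i := by
  rw [pow_succ, sqrtd_pow_two_mul, im_mul, re_intCast, im_intCast, re_sqrtd, im_sqrtd]
  ring

theorem im_sum {ι : Type*} (s : Finset ι) (f : ι → ℤ√d) :
    (∑ i ∈ s, f i).im = ∑ i ∈ s, (f i).im :=
  map_sum (AddMonoidHom.mk' im im_add) f s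

theorem im_mul_natCast (z : ℤ√d) (n : ℕ) : (z * n).im = z.im * n := by
  simp [im_mul]

theorem im_one_add_sqrtd_pow_two_mul_add_two (n : ℕ) :
    ((1 + sqrtd : ℤ√d) ^ (2 * n + 2)).im =
      ∑ i ∈ range (n + 1), ((2 * n + 2).choose (2 * i + 1) : ℤ) * d ^ (n - i) := by
  rw [show 2 * n + 2 = 2 * (n + 1) by ring, add_pow, im_sum, sum_range_succ, sum_range_two_mul]
  simp only [one_pow, one_mul, im_mul_natCast, im_natCast, Nat.sub_self, pow_zero, add_zero]
  refine Finset.sum_congr rfl fun i hi => ?_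
  have hin : i ≤ n := Nat.lt_succ_iff.mp (mem_range.mp hi)
  rw [show 2 * (n + 1) - 2 * i = 2 * (n + 1 - i) by omega, im_sqrtd_pow_two_mul,
    show 2 * (n + 1) - (2 * i + 1) = 2 * (n - i) + 1 by omega, im_sqrtd_pow_two_mul_add_one]
  ring

theorem mk_eq_one_add_sqrtd_pow {a b : ℕ → ℤ} (ha0 : a 0 = 1) (hb0 : b 0 = 1)
    (ha : ∀ n, a (n + 1) = a n + d * b n) (hb : ∀ n, b (n + 1) = a n + b n) (n : ℕ) :
    (⟨a n, b n⟩ : ℤ√d) = (1 + sqrtd) ^ (n + 1) := by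
  induction n with
  | zero => ext <;> simp [ha0, hb0]
  | succ n ih =>
    rw [pow_succ, ← ih]
    ext <;> simp [ha, hb]

end Zsqrtd

theorem stmt1_general (k : ℤ) (a b : ℕ → ℤ)
    (ha0 : a 0 = 1) (hb0 : b 0 = 1)
    (ha : ∀ n, a (n + 1) = a n + k * b n)
    (hb : ∀ n, b (n + 1) = a n + b n) :
    ∀ n, b (2 * n + 1) = ∑ i ∈ Finset.range (n + 1),
      (Nat.choose (2 * n + 2) (2 * i + 1) : ℤ) * k ^ (n - i) := by
  intro n
  rw [← im_one_add_sqrtd_pow_two_mul_add_two, ← mk_eq_one_add_sqrtd_pow ha0 hb0 ha hb]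

theorem stmt1 (k : ℤ) (hk : 1 ≤ k) (a b : ℕ → ℤ)
    (ha0 : a 0 = 1) (hb0 : b 0 = 1)
    (ha : ∀ n, a (n + 1) = a n + k * b n)
    (hb : ∀ n, b (n + 1) = a n + b n) :
    ∀ n, b (2 * n + 1) = ∑ i ∈ Finset.range (n + 1),
      (Nat.choose (2 * n + 2) (2 * i + 1) : ℤ) * k ^ (n - i) :=
  stmt1_general k a b ha0 hb0 ha hb
end

section
/- For all n ≥ 0, a_{2n+1} = (α^{n+1} + β^{n+1})/2, where α = k+1+2√k and β = k+1−2√k. -/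
theorem stmt2 (k : ℤ) (hk : 1 ≤ k) (a b : ℕ → ℝ)
    (ha0 : a 0 = 1) (hb0 : b 0 = 1)
    (ha : ∀ n, a (n + 1) = a n + (k : ℝ) * b n)
    (hb : ∀ n, b (n + 1) = a n + b n)
    (α β : ℝ) (hα : α = k + 1 + 2 * Real.sqrt k) (hβ : β = k + 1 - 2 * Real.sqrt k) :
    ∀ n, a (2 * n + 1) = (α ^ (n + 1) + β ^ (n + 1)) / 2 := by
  set s := Real.sqrt k with hsdef
  have hs : s ^ 2 = (k : ℝ) := Real.sq_sqrt (by exact_mod_cast le_trans zero_le_one hk)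
  have key : ∀ n, a n = ((1+s)^(n+1) + (1-s)^(n+1))/2 ∧
      s * b n = ((1+s)^(n+1) - (1-s)^(n+1))/2 := by
    intro n
    induction n with
    | zero => simp [ha0, hb0]
    | succ n ih =>
      obtain ⟨h1, h2⟩ := ih
      constructor
      · rw [ha n, h1]
        have hkb : (k : ℝ) * b n = s * (s * b n) := by rw [← mul_assoc, ← hs]; ring
        rw [hkb, h2]; ring
      · rw [hb n]
        have : s * (a n + b n) = s * a n + s * b n := by ring
        rw [this, h2]
        have : s * a n = s * (((1+s)^(n+1) + (1-s)^(n+1))/2) := by rw [h1]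
        rw [this]; ring
  intro n
  have hα' : α = (1+s)^2 := by rw [hα, ← hs]; ring
  have hβ' : β = (1-s)^2 := by rw [hβ, ← hs]; ring
  rw [(key (2*n+1)).1, hα', hβ', ← pow_mul, ← pow_mul,
    show (2:ℕ)*(n+1) = 2*n+1+1 by ring]
end

section
/- The sequence u_n / v_n converges to √(k/h) as n → ∞. -/
/-!
With `a² = h` and `b² = k`, the combinations `a u_n ± b v_n` are eigen-sequences of the
recurrence: they are multiplied by `1 ± ab` at each step. Hence
`u_n / v_n = (b / a) · (A + B qⁿ) / (A - B qⁿ)` with `A, B = a u_0 ± b v_0` and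
`q = (1 - ab) / (1 + ab)`, where `|q| < 1` because `ab > 0`.
-/

open Filter Topology

section Recurrence

variable {a b : ℝ} {x y : ℕ → ℝ}

theorem mul_add_mul_eq_one_add_mul_pow_mul
    (hx : ∀ n, x (n + 1) = x n + b ^ 2 * y n) (hy : ∀ n, y (n + 1) = a ^ 2 * x n + y n)
    (n : ℕ) : a * x n + b * y n = (1 + a * b) ^ n * (a * x 0 + b * y 0) := by
  induction n with
  | zero => ring
  | succ n ih => rw [hx, hy]; linear_combination (1 + a * b) * ih

theorem tendsto_div_of_recurrence (hab : 0 < a * b)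
    (hx : ∀ n, x (n + 1) = x n + b ^ 2 * y n) (hy : ∀ n, y (n + 1) = a ^ 2 * x n + y n)
    (h0 : a * x 0 + b * y 0 ≠ 0) :
    Tendsto (fun n => x n / y n) atTop (𝓝 (b / a)) := by
  set A := a * x 0 + b * y 0
  set B := a * x 0 - b * y 0
  set p := 1 + a * b
  set q := (1 - a * b) / p
  have hp : 0 < p := by positivity
  have hq : |q| < 1 := by
    rw [abs_div, abs_of_pos hp, div_lt_one hp, abs_lt]
    constructor <;> linarith
  have hplus := mul_add_mul_eq_one_add_mul_pow_mul hx hy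
  have hminus : ∀ n, a * x n - b * y n = (1 - a * b) ^ n * B := by
    intro n
    have := mul_add_mul_eq_one_add_mul_pow_mul (b := -b) (by simpa using hx) hy n
    simp only [neg_mul, mul_neg, ← sub_eq_add_neg] at this
    exact this
  have hpow : ∀ n, q ^ n * p ^ n = (1 - a * b) ^ n := fun n => by
    rw [← mul_pow, div_mul_cancel₀ _ hp.ne']
  have hxn : ∀ n, a * x n / p ^ n = (A + B * q ^ n) / 2 := fun n => by
    rw [div_eq_iff (pow_ne_zero n hp.ne')]
    linear_combination (hplus n + hminus n) / 2 - B / 2 * hpow n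
  have hyn : ∀ n, b * y n / p ^ n = (A - B * q ^ n) / 2 := fun n => by
    rw [div_eq_iff (pow_ne_zero n hp.ne')]
    linear_combination (hplus n - hminus n) / 2 + B / 2 * hpow n
  have hratio : ∀ n, x n / y n = b / a * ((A + B * q ^ n) / (A - B * q ^ n)) := fun n => by
    have ha : a ≠ 0 := left_ne_zero_of_mul hab.ne'
    have hb : b ≠ 0 := right_ne_zero_of_mul hab.ne'
    calc x n / y n = b * (a * x n / p ^ n) / (a * (b * y n / p ^ n)) := by
          field_simp
      _ = _ := by rw [hxn, hyn, mul_div_mul_comm, div_div_div_cancel_right₀ two_ne_zero]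
  have hq0 : Tendsto (fun n => q ^ n) atTop (𝓝 0) := tendsto_pow_atTop_nhds_zero_of_abs_lt_one hq
  have hlim : Tendsto (fun n => (A + B * q ^ n) / (A - B * q ^ n)) atTop (𝓝 1) := by
    have := ((hq0.const_mul B).const_add A).div ((hq0.const_mul B).const_sub A) (by simpa using h0)
    rwa [mul_zero, add_zero, sub_zero, div_self h0] at this
  simpa [hratio] using hlim.const_mul (b / a)

end Recurrence

theorem stmt7 (h k : ℕ) (hh : 1 ≤ h) (hk : 1 ≤ k) (u v : ℕ → ℕ)
    (hu0 : u 0 = 1) (hv0 : v 0 = 0)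
    (hu : ∀ n, u (n + 1) = u n + k * v n)
    (hv : ∀ n, v (n + 1) = h * u n + v n) :
    Filter.Tendsto (fun n => (u n : ℝ) / (v n : ℝ)) Filter.atTop
      (nhds (Real.sqrt ((k : ℝ) / (h : ℝ)))) := by
  have hh' : (0 : ℝ) < h := by exact_mod_cast hh
  have hk' : (0 : ℝ) < k := by exact_mod_cast hk
  rw [Real.sqrt_div hk'.le]
  refine tendsto_div_of_recurrence (mul_pos (Real.sqrt_pos.2 hh') (Real.sqrt_pos.2 hk'))
    (fun n => ?_) (fun n => ?_) (by simp [hu0, hv0, hh'.ne'])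
  · rw [Real.sq_sqrt hk'.le, hu]; push_cast; ring
  · rw [Real.sq_sqrt hh'.le, hv]; push_cast; ring
end

section
/- For all n ≥ 0, u_{2n} = Σ_{i=0}^{n} C(2n, 2i) (hk)^i and v_{2n+1} = h·Σ_{i=0}^{n} C(2n+1, 2i+1) (hk)^i. -/
open Finset

theorem stmt8 (h k : ℕ) (hh : 1 ≤ h) (hk : 1 ≤ k) (u v : ℕ → ℕ)
    (hu0 : u 0 = 1) (hv0 : v 0 = 0)
    (hu : ∀ n, u (n + 1) = u n + k * v n)
    (hv : ∀ n, v (n + 1) = h * u n + v n) :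
    ∀ n, u (2 * n) = ∑ i ∈ Finset.range (n + 1),
        Nat.choose (2 * n) (2 * i) * (h * k) ^ i ∧
      v (2 * n + 1) = h * ∑ i ∈ Finset.range (n + 1),
        Nat.choose (2 * n + 1) (2 * i + 1) * (h * k) ^ i := by
  set x := h * k with hx
  have key : ∀ n, u n = ∑ i ∈ range (n+1), Nat.choose n (2*i) * x ^ i ∧
      v n = h * ∑ i ∈ range (n+1), Nat.choose n (2*i+1) * x ^ i := by
    intro n
    induction n with
    | zero => simp [hu0, hv0]
    | succ n ih =>
      obtain ⟨ihu, ihv⟩ := ih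
      have hv' : k * v n = ∑ i ∈ range (n+1), Nat.choose n (2*i+1) * x ^ (i+1) := by
        rw [ihv, ← mul_assoc, mul_comm k h, ← hx, Finset.mul_sum]
        exact Finset.sum_congr rfl fun i _ => by ring
      constructor
      · rw [hu n, ihu, hv']
        rw [Finset.sum_range_succ' (fun i => Nat.choose (n+1) (2*i) * x ^ i) (n+1)]
        have e1 : ∀ i ∈ range (n+1), Nat.choose (n+1) (2*(i+1)) * x ^ (i+1)
            = Nat.choose n (2*i+1) * x ^ (i+1) + Nat.choose n (2*i+2) * x ^ (i+1) := by
          intro i _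
          have : 2*(i+1) = (2*i+1)+1 := by ring
          rw [this, Nat.choose_succ_succ', add_mul]
        rw [Finset.sum_congr rfl e1, Finset.sum_add_distrib]
        have e2 : ∑ i ∈ range (n+1), Nat.choose n (2*i+2) * x ^ (i+1)
            = ∑ i ∈ range (n+1), Nat.choose n (2*i) * x ^ i - 1 := by
          rw [Finset.sum_range_succ' (fun i => Nat.choose n (2*i) * x ^ i) n]
          rw [Finset.sum_range_succ]
          have : Nat.choose n (2*n+2) = 0 := Nat.choose_eq_zero_of_lt (by omega)
          simp [this, mul_add, Nat.choose_zero_right]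
        rw [e2]
        have hpos : 1 ≤ ∑ i ∈ range (n+1), Nat.choose n (2*i) * x ^ i := by
          calc 1 = Nat.choose n 0 * x ^ 0 := by simp
          _ ≤ _ := Finset.single_le_sum (f := fun i => Nat.choose n (2*i) * x ^ i)
              (fun i _ => Nat.zero_le _) (by simp : 0 ∈ range (n+1))
        simp only [Nat.choose_zero_right, pow_zero, mul_one, mul_zero]
        omega
      · rw [hv n, ihu, ihv, ← mul_add]
        congr 1
        rw [Finset.sum_range_succ (fun i => Nat.choose (n+1) (2*i+1) * x ^ i) (n+1)]
        have : Nat.choose (n+1) (2*(n+1)+1) = 0 := Nat.choose_eq_zero_of_lt (by omega)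
        rw [this, zero_mul, add_zero, ← Finset.sum_add_distrib]
        exact Finset.sum_congr rfl fun i _ => by
          rw [← add_mul, ← Nat.choose_succ_succ']
  intro n
  refine ⟨?_, ?_⟩
  · rw [(key (2*n)).1]
    exact (Finset.sum_subset (Finset.range_subset_range.2 (by omega))
      (fun i _ hi => by
        have : Nat.choose (2*n) (2*i) = 0 := Nat.choose_eq_zero_of_lt (by simp at hi ⊢; omega)
        simp [this])).symm
  · rw [(key (2*n+1)).2]
    congr 1
    exact (Finset.sum_subset (Finset.range_subset_range.2 (by omega))
      (fun i _ hi => by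
        have : Nat.choose (2*n+1) (2*i+1) = 0 := Nat.choose_eq_zero_of_lt (by simp at hi ⊢; omega)
        simp [this])).symm
end

section
/- For all n ≥ 1, a_{2n} = 2·a_{n-1}·a_n − (1−k)^n. -/
theorem stmt12 (k : ℤ) (hk : 1 ≤ k) (a : ℕ → ℤ)
    (ha0 : a 0 = 1) (ha1 : a 1 = k + 1)
    (ha : ∀ n, a (n + 2) = 2 * a (n + 1) + (k - 1) * a n) :
    ∀ n ≥ 1, a (2 * n) = 2 * a (n - 1) * a n - (1 - k) ^ n := by
  have cas : ∀ n, a n * a (n + 2) - a (n + 1) ^ 2 = k * (1 - k) ^ (n + 1) := by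
    intro n
    induction n with
    | zero =>
      rw [ha 0, ha0, ha1]; ring
    | succ m ih =>
      have h1 := ha m
      have h2 := ha (m + 1)
      linear_combination a (m + 1) * h2 - a (m + 2) * h1 - (k - 1) * ih
  have key : ∀ m, a (2 * m + 2) = 2 * a m * a (m + 1) - (1 - k) ^ (m + 1) ∧
      a (2 * m + 3) = 2 * (a (m + 1)) ^ 2 - (1 - k) ^ (m + 2) := by
    intro m
    induction m with
    | zero =>
      constructor
      · rw [ha 0, ha0, ha1]; ring
      · rw [show (2 * 0 + 3 : ℕ) = 1 + 2 from rfl, ha 1, ha 0, ha0, ha1]; ring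
    | succ m ih =>
      obtain ⟨ihP, ihQ⟩ := ih
      have hm : a (m + 2) = 2 * a (m + 1) + (k - 1) * a m := ha m
      have hE : a (2 * m + 4) = 2 * a (2 * m + 3) + (k - 1) * a (2 * m + 2) :=
        ha (2 * m + 2)
      have hO : a (2 * m + 5) = 2 * a (2 * m + 4) + (k - 1) * a (2 * m + 3) :=
        ha (2 * m + 3)
      have hc := cas m
      have hP2 : a (2 * m + 4) = 2 * a (m + 1) * a (m + 2) - (1 - k) ^ (m + 2) := by
        linear_combination hE + 2 * ihQ + (k - 1) * ihP - 2 * a (m + 1) * hm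
      refine ⟨hP2, ?_⟩
      show a (2 * m + 5) = 2 * (a (m + 2)) ^ 2 - (1 - k) ^ (m + 3)
      linear_combination hO + 2 * hP2 + (k - 1) * ihQ - 2 * a (m + 2) * hm
        + 2 * (1 - k) * hc
  intro n hn
  obtain ⟨m, rfl⟩ := Nat.exists_eq_add_of_le hn
  rw [show (1 + m : ℕ) = m + 1 from by omega]
  rw [show 2 * (m + 1) = 2 * m + 2 from by omega, show m + 1 - 1 = m from rfl]
  exact (key m).1
end

section
/- For all m ≥ 1 and n ≥ 0, (k−1)·a_{m-1}·a_n + a_m·a_{n+1} = k·b_{m+n+1}. -/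
theorem stmt14 (k : ℤ) (hk : 1 ≤ k) (a b : ℕ → ℤ)
    (ha0 : a 0 = 1) (ha1 : a 1 = k + 1)
    (ha : ∀ n, a (n + 2) = 2 * a (n + 1) + (k - 1) * a n)
    (hb0 : b 0 = 1) (hb1 : b 1 = 2)
    (hb : ∀ n, b (n + 2) = 2 * b (n + 1) + (k - 1) * b n) :
    ∀ m ≥ 1, ∀ n, (k - 1) * a (m - 1) * a n + a m * a (n + 1) = k * b (m + n + 1) := by
  -- base case n = 0, all m
  have hm0 : ∀ m, (k - 1) * a m * a 0 + a (m + 1) * a 1 = k * b (m + 2) := by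
    have H : ∀ m, ((k - 1) * a m * a 0 + a (m + 1) * a 1 = k * b (m + 2)) ∧
        ((k - 1) * a (m + 1) * a 0 + a (m + 2) * a 1 = k * b (m + 3)) := by
      intro m
      induction m with
      | zero =>
        constructor
        · rw [ha0, ha1, hb 0, hb0, hb1]; ring
        · rw [ha 0, hb 1, hb 0, ha0, ha1, hb0, hb1]; ring
      | succ m ih =>
        refine ⟨ih.2, ?_⟩
        have e := hb (m + 2)
        rw [show m + 1 + 2 = m + 2 + 1 by omega, show m + 1 + 3 = m + 2 + 2 by omega]
        linear_combination ((k - 1) * a 0) * (ha m) + (a 1) * (ha (m + 1)) - k * e +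
          (k - 1) * ih.1 + 2 * ih.2
    exact fun m => (H m).1
  -- base case n = 1, all m
  have hm1 : ∀ m, (k - 1) * a m * a 1 + a (m + 1) * a 2 = k * b (m + 3) := by
    have H : ∀ m, ((k - 1) * a m * a 1 + a (m + 1) * a 2 = k * b (m + 3)) ∧
        ((k - 1) * a (m + 1) * a 1 + a (m + 2) * a 2 = k * b (m + 4)) := by
      intro m
      induction m with
      | zero =>
        constructor
        · rw [ha 0, hb 1, hb 0, ha0, ha1, hb0, hb1]; ring
        · rw [ha 0, hb 2, hb 1, hb 0, ha0, ha1, hb0, hb1]; ring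
      | succ m ih =>
        refine ⟨ih.2, ?_⟩
        have e := hb (m + 3)
        rw [show m + 1 + 4 = m + 3 + 2 by omega]
        linear_combination ((k - 1) * a 1) * (ha m) + (a 2) * (ha (m + 1)) - k * e +
          (k - 1) * ih.1 + 2 * ih.2
    exact fun m => (H m).1
  -- main induction on n
  have key : ∀ n m, ((k - 1) * a m * a n + a (m + 1) * a (n + 1) = k * b (m + n + 2)) ∧
      ((k - 1) * a m * a (n + 1) + a (m + 1) * a (n + 2) = k * b (m + n + 3)) := by
    intro n
    induction n with
    | zero =>
      intro m
      refine ⟨by simpa using hm0 m, ?_⟩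
      have := hm1 m
      rw [show m + 0 + 3 = m + 3 by omega]
      exact this
    | succ n ih =>
      intro m
      refine ⟨(ih m).2, ?_⟩
      have e := hb (m + n + 2)
      have i1 := (ih m).1
      have i2 := (ih m).2
      rw [show m + (n + 1) + 3 = m + n + 2 + 2 by omega,
        show n + 1 + 1 = n + 2 by omega, show n + 1 + 2 = n + 3 by omega,
        show (n + 3 : ℕ) = (n + 1) + 2 by omega]
      linear_combination ((k - 1) * a m) * (ha n) + (a (m + 1)) * (ha (n + 1)) - k * e +
        (k - 1) * i1 + 2 * i2
  intro m hm n
  obtain ⟨m', rfl⟩ : ∃ m', m = m' + 1 := ⟨m - 1, (Nat.succ_pred_eq_of_pos hm).symm⟩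
  have h := (key n m').1
  rw [show m' + 1 - 1 = m' by omega, show m' + 1 + n + 1 = m' + n + 2 by omega]
  exact h
end

section
/- For all n ≥ 2, a_n = 2a_{n-1}² − (k−1)^{2^{n-1}}. -/
theorem stmt15 (k : ℤ) (hk : 1 < k) (a b : ℕ → ℤ)
    (ha0 : a 0 = 1) (hb0 : b 0 = 1)
    (ha : ∀ n, a (n + 1) = (a n) ^ 2 + k * (b n) ^ 2)
    (hb : ∀ n, b (n + 1) = 2 * a n * b n) :
    ∀ n ≥ 2, a n = 2 * (a (n - 1)) ^ 2 - (k - 1) ^ (2 ^ (n - 1)) := by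
  have key : ∀ n, a n ^ 2 - k * b n ^ 2 = (1 - k) ^ (2 ^ n) := by
    intro n
    induction n with
    | zero => simp [ha0, hb0]
    | succ n ih =>
      rw [ha, hb, show (2:ℕ)^(n+1) = 2^n * 2 from by ring, pow_mul, ← ih]; ring
  intro n hn
  obtain ⟨m, rfl⟩ : ∃ m, n = m + 2 := ⟨n - 2, by omega⟩
  have h1 : m + 2 - 1 = m + 1 := by omega
  rw [h1, ha (m + 1)]
  have hk2 := key (m + 1)
  have heven : (1 - k) ^ 2 ^ (m + 1) = (k - 1) ^ 2 ^ (m + 1) := by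
    have : (1 - k) = -(k - 1) := by ring
    rw [this, (Even.neg_pow ⟨2^m, by ring⟩)]
  linarith [hk2, heven.symm ▸ hk2]
end

section
/- For all n ≥ 1, k·b_n² + (k−1)^{2^n} is a perfect square; in fact it equals a_n². -/
theorem stmt17 (k : ℤ) (hk : 1 < k) (a b : ℕ → ℤ)
    (ha0 : a 0 = 1) (hb0 : b 0 = 1)
    (ha : ∀ n, a (n + 1) = (a n) ^ 2 + k * (b n) ^ 2)
    (hb : ∀ n, b (n + 1) = 2 * a n * b n) :
    ∀ n ≥ 1, k * (b n) ^ 2 + (k - 1) ^ (2 ^ n) = (a n) ^ 2 := by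
  have key : ∀ n, k * (b (n + 1)) ^ 2 + (k - 1) ^ (2 ^ (n + 1)) = (a (n + 1)) ^ 2 := by
    intro n
    induction n with
    | zero =>
      rw [ha, hb, ha0, hb0]
      ring
    | succ m ih =>
      rw [ha, hb]
      have h2 : (2 : ℕ) ^ (m + 1 + 1) = 2 ^ (m + 1) * 2 := by ring
      rw [h2, pow_mul]
      have : (k - 1) ^ 2 ^ (m + 1) = (a (m + 1)) ^ 2 - k * (b (m + 1)) ^ 2 := by
        linarith [ih]
      rw [this]
      ring
  intro n hn
  obtain ⟨m, rfl⟩ := Nat.exists_eq_add_of_le hn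
  rw [add_comm 1 m]
  exact key m
end

section
/- The infinite product Π_{i=1}^{∞} (1 + 1/c_i) converges to √((r+1)/(r−1)). -/
/-!
Put `R x = (x - 1) / (x + 1)`. The doubling map `x ↦ 2x² - 1` satisfies
`R (2x² - 1) = R x * (1 + 1/x)²`, so along `x₀ = r`, `xₙ₊₁ = 2xₙ² - 1` the squared partial
products telescope: `(∏_{i<n} (1 + 1/xᵢ))² = R xₙ / R r`. Since `xₙ → ∞`, `R xₙ → 1`, and the
products tend to `√(1 / R r) = √((r + 1) / (r - 1))`.
-/

open Finset Filter Topology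

theorem two_mul_sq_sub_one_sub_one_div_add_one {K : Type*} [Field K] [NeZero (2 : K)] {x : K}
    (hx : x ≠ 0) :
    (2 * x ^ 2 - 1 - 1) / (2 * x ^ 2 - 1 + 1) = (x - 1) / (x + 1) * (1 + 1 / x) ^ 2 := by
  rcases eq_or_ne (x + 1) 0 with h | h
  · rw [eq_neg_of_add_eq_zero_left h]
    norm_num
  · field_simp
    ring

theorem tendsto_sub_one_div_add_one_nhds_one {α : Type*} {l : Filter α} {f : α → ℝ}
    (hf : Tendsto f l atTop) : Tendsto (fun a ↦ (f a - 1) / (f a + 1)) l (𝓝 1) := by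
  have h : Tendsto (fun a ↦ 1 - 2 / (f a + 1)) l (𝓝 (1 - 0)) :=
    tendsto_const_nhds.sub ((tendsto_atTop_add_const_right l 1 hf).const_div_atTop 2)
  rw [sub_zero] at h
  refine h.congr' ?_
  filter_upwards [hf.eventually_gt_atTop 0] with a ha
  field_simp
  ring

section DoublingRecurrence

variable {x : ℕ → ℝ} (h0 : 1 < x 0) (hx : ∀ n, x (n + 1) = 2 * x n ^ 2 - 1)
include h0 hx

theorem add_one_mul_sub_one_le_of_two_mul_sq_sub_one (n : ℕ) : (n + 1) * (x 0 - 1) ≤ x n - 1 := by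
  induction n with
  | zero => simp
  | succ n ih =>
    have hxn : x 0 ≤ x n := by nlinarith [Nat.cast_nonneg (α := ℝ) n]
    -- `x (n + 1) - 1 = 2 (x n - 1) (x n + 1) ≥ 4 (x n - 1)`
    rw [hx]
    push_cast
    nlinarith

theorem one_lt_of_two_mul_sq_sub_one (n : ℕ) : 1 < x n := by
  nlinarith [add_one_mul_sub_one_le_of_two_mul_sq_sub_one h0 hx n, Nat.cast_nonneg (α := ℝ) n]

theorem tendsto_atTop_of_two_mul_sq_sub_one : Tendsto x atTop atTop := by
  refine tendsto_atTop_mono (fun n ↦ ?_) (tendsto_atTop_add_const_right _ 1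
    (tendsto_natCast_atTop_atTop.atTop_mul_const (sub_pos.2 h0)))
  nlinarith [add_one_mul_sub_one_le_of_two_mul_sq_sub_one h0 hx n]

theorem sq_prod_one_add_inv_of_two_mul_sq_sub_one (n : ℕ) :
    (∏ i ∈ range n, (1 + 1 / x i)) ^ 2 = (x 0 + 1) / (x 0 - 1) * ((x n - 1) / (x n + 1)) := by
  induction n with
  | zero =>
    have : x 0 - 1 ≠ 0 := by linarith
    have : x 0 + 1 ≠ 0 := by linarith
    field_simp
    simp
  | succ n ih =>
    rw [prod_range_succ, mul_pow, ih, hx, two_mul_sq_sub_one_sub_one_div_add_one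
      (zero_lt_one.trans (one_lt_of_two_mul_sq_sub_one h0 hx n)).ne']
    ring

theorem tendsto_prod_one_add_inv_of_two_mul_sq_sub_one :
    Tendsto (fun n ↦ ∏ i ∈ range n, (1 + 1 / x i)) atTop
      (𝓝 (Real.sqrt ((x 0 + 1) / (x 0 - 1)))) := by
  have hsq : Tendsto (fun n ↦ (∏ i ∈ range n, (1 + 1 / x i)) ^ 2) atTop
      (𝓝 ((x 0 + 1) / (x 0 - 1))) := by
    have h := (tendsto_sub_one_div_add_one_nhds_one
      (tendsto_atTop_of_two_mul_sq_sub_one h0 hx)).const_mul ((x 0 + 1) / (x 0 - 1))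
    rw [mul_one] at h
    exact h.congr fun n ↦ (sq_prod_one_add_inv_of_two_mul_sq_sub_one h0 hx n).symm
  refine hsq.sqrt.congr fun n ↦ Real.sqrt_sq (prod_nonneg fun i _ ↦ ?_)
  have := one_lt_of_two_mul_sq_sub_one h0 hx i
  positivity

end DoublingRecurrence

theorem stmt19_general (r : ℤ) (hr : 1 < r) (c : ℕ → ℤ)
    (hc1 : c 1 = r)
    (hc : ∀ n, c (n + 2) = 2 * (c (n + 1)) ^ 2 - 1) :
    Filter.Tendsto (fun n => ∏ i ∈ Finset.Icc 1 n, (1 + 1 / (c i : ℝ)))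
      Filter.atTop (nhds (Real.sqrt (((r : ℝ) + 1) / ((r : ℝ) - 1)))) := by
  have hlim := tendsto_prod_one_add_inv_of_two_mul_sq_sub_one (x := fun n ↦ (c (n + 1) : ℝ))
    (by simp only [hc1]; exact_mod_cast hr) (fun n ↦ by simp [hc])
  simp only [zero_add, hc1] at hlim
  refine hlim.congr fun n ↦ ?_
  rw [range_eq_Ico, prod_Ico_add' (fun i ↦ 1 + 1 / (c i : ℝ)), zero_add, Ico_add_one_right_eq_Icc]

theorem stmt19 (r : ℤ) (hr : 1 < r) (c : ℕ → ℤ)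
    (hc0 : c 0 = 1) (hc1 : c 1 = r)
    (hc : ∀ n, c (n + 2) = 2 * (c (n + 1)) ^ 2 - 1) :
    Filter.Tendsto (fun n => ∏ i ∈ Finset.Icc 1 n, (1 + 1 / (c i : ℝ)))
      Filter.atTop (nhds (Real.sqrt (((r : ℝ) + 1) / ((r : ℝ) - 1)))) :=
  stmt19_general r hr c hc1 hc
end
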